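/- arXiv:1312.4392 — 3 statements merged into one kernel-verified Lean document; each statement's English description precedes it below -/
import Mathlib

section
/- Quadratic Kantorovich lower bound: for probability measures μ, ν on ℝ with finite second moments, means m(μ), m(ν) and standard deviations s(μ), s(ν), the order-2 Wasserstein distance satisfies D_2(μ, ν)² ≥ (s(μ) − s(ν))² + (m(μ) − m(ν))². -/
open MeasureTheory ENNReal

noncomputable section

/-- A coupling of `μ` and `ν`: a measure on the product with the given marginals. -/
def IsCoupling (γ : Measure (ℝ × ℝ)) (μ ν : Measure ℝ) : Prop :=
  γ.map Prod.fst = μ ∧ γ.map Prod.snd = ν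

/-- The Wasserstein distance of order `α` for probability measures on ℝ. -/
def wassersteinDist (α : ℝ) (μ ν : Measure ℝ) : ℝ≥0∞ :=
  ⨅ γ ∈ {γ : Measure (ℝ × ℝ) | IsProbabilityMeasure γ ∧ IsCoupling γ μ ν},
    (∫⁻ p, edist p.1 p.2 ^ α ∂γ) ^ (1 / α)

/-- Convolution of measures on ℝ: the law of the sum of independent random variables. -/
def mconv (η μ : Measure ℝ) : Measure ℝ :=
  (η.prod μ).map fun p => p.1 + p.2

/-- Mean of a probability measure on ℝ. -/
def mean (μ : Measure ℝ) : ℝ := ∫ x, x ∂μ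

/-- Standard deviation of a probability measure on ℝ. -/
def sdev (μ : Measure ℝ) : ℝ := Real.sqrt ((∫ x, x ^ 2 ∂μ) - (mean μ) ^ 2)

lemma int_id_of_sq {μ : Measure ℝ} [IsProbabilityMeasure μ]
    (h : Integrable (fun x => x ^ 2) μ) : Integrable (fun x : ℝ => x) μ := by
  have hg : Integrable (fun x : ℝ => x ^ 2 + 1) μ := h.add (integrable_const 1)
  refine hg.mono' aestronglyMeasurable_id (ae_of_all _ fun x => ?_)
  have h1 : |x| ≤ x ^ 2 + 1 := by nlinarith [sq_abs x, abs_nonneg x, sq_nonneg (|x| - 1)]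
  simpa [Real.norm_eq_abs] using h1

lemma int_centered_sq {μ : Measure ℝ} [IsProbabilityMeasure μ]
    (h : Integrable (fun x => x ^ 2) μ) (c : ℝ) :
    Integrable (fun x : ℝ => (x - c) ^ 2) μ := by
  have e : (fun x : ℝ => (x - c) ^ 2) = fun x => x ^ 2 - (2 * c) * x + c ^ 2 := by
    funext x; ring
  rw [e]
  exact (h.sub ((int_id_of_sq h).const_mul _)).add (integrable_const _)

lemma var_eq {μ : Measure ℝ} [IsProbabilityMeasure μ]
    (h : Integrable (fun x => x ^ 2) μ) (c : ℝ) :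
    ∫ x, (x - c) ^ 2 ∂μ = (∫ x, x ^ 2 ∂μ) - 2 * c * mean μ + c ^ 2 := by
  have hid := int_id_of_sq h
  have e : (fun x : ℝ => (x - c) ^ 2) = fun x => x ^ 2 - (2 * c) * x + c ^ 2 := by
    funext x; ring
  have hA : Integrable (fun x : ℝ => x ^ 2 - 2 * c * x) μ := h.sub (hid.const_mul _)
  have hB : Integrable (fun x : ℝ => 2 * c * x) μ := hid.const_mul _
  rw [e, integral_add hA (integrable_const _), integral_sub h hB, integral_const_mul]
  simp [mean, measure_univ]

lemma var_nonneg {μ : Measure ℝ} [IsProbabilityMeasure μ]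
    (h : Integrable (fun x => x ^ 2) μ) :
    0 ≤ (∫ x, x ^ 2 ∂μ) - mean μ ^ 2 := by
  have h1 := var_eq h (mean μ)
  have h2 : 0 ≤ ∫ x, (x - mean μ) ^ 2 ∂μ := integral_nonneg fun x => sq_nonneg _
  nlinarith

lemma sdev_sq {μ : Measure ℝ} [IsProbabilityMeasure μ]
    (h : Integrable (fun x => x ^ 2) μ) :
    sdev μ ^ 2 = (∫ x, x ^ 2 ∂μ) - mean μ ^ 2 :=
  Real.sq_sqrt (var_nonneg h)

-- transfer lemmas
lemma integral_fst {γ : Measure (ℝ × ℝ)} {μ : Measure ℝ}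
    (h : γ.map Prod.fst = μ) {f : ℝ → ℝ} (hf : AEStronglyMeasurable f μ) :
    ∫ p, f p.1 ∂γ = ∫ x, f x ∂μ := by
  rw [← h]
  exact (integral_map measurable_fst.aemeasurable (h ▸ hf)).symm

lemma integral_snd {γ : Measure (ℝ × ℝ)} {ν : Measure ℝ}
    (h : γ.map Prod.snd = ν) {f : ℝ → ℝ} (hf : AEStronglyMeasurable f ν) :
    ∫ p, f p.2 ∂γ = ∫ x, f x ∂ν := by
  rw [← h]
  exact (integral_map measurable_snd.aemeasurable (h ▸ hf)).symm

lemma integrable_fst {γ : Measure (ℝ × ℝ)} {μ : Measure ℝ}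
    (h : γ.map Prod.fst = μ) {f : ℝ → ℝ} (hf : AEStronglyMeasurable f μ)
    (hi : Integrable f μ) : Integrable (fun p : ℝ × ℝ => f p.1) γ := by
  rw [← h] at hi
  exact (integrable_map_measure (h ▸ hf) measurable_fst.aemeasurable).1 hi

lemma integrable_snd {γ : Measure (ℝ × ℝ)} {ν : Measure ℝ}
    (h : γ.map Prod.snd = ν) {f : ℝ → ℝ} (hf : AEStronglyMeasurable f ν)
    (hi : Integrable f ν) : Integrable (fun p : ℝ × ℝ => f p.2) γ := by
  rw [← h] at hi
  exact (integrable_map_measure (h ▸ hf) measurable_snd.aemeasurable).1 hi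

lemma aux_cs {A B C : ℝ} (hA : 0 ≤ A) (hB : 0 ≤ B)
    (h : ∀ a : ℝ, 0 < a → C ≤ (a * A + B / a) / 2) : C ≤ Real.sqrt A * Real.sqrt B := by
  rcases eq_or_lt_of_le hA with hA0 | hA0
  · rw [← hA0, Real.sqrt_zero, zero_mul]
    by_contra hC; push_neg at hC
    have ha : (0:ℝ) < (B + 1) / C := div_pos (by linarith) hC
    have h1 := h _ ha
    rw [← hA0, mul_zero, zero_add, div_div_eq_mul_div] at h1
    have key : B * C / (B + 1) ≤ C := by
      rw [div_le_iff₀ (by linarith)]; nlinarith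
    linarith
  · rcases eq_or_lt_of_le hB with hB0 | hB0
    · rw [← hB0, Real.sqrt_zero, mul_zero]
      by_contra hC; push_neg at hC
      have ha : (0:ℝ) < C / (A + 1) := div_pos hC (by linarith)
      have h1 := h _ ha
      rw [← hB0, zero_div, add_zero, div_mul_eq_mul_div] at h1
      have key : C * A / (A + 1) ≤ C := by
        rw [div_le_iff₀ (by linarith)]; nlinarith
      linarith
    · have hsA : 0 < Real.sqrt A := Real.sqrt_pos.2 hA0
      have hsB : 0 < Real.sqrt B := Real.sqrt_pos.2 hB0
      have h1 := h _ (div_pos hsB hsA)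
      have e : Real.sqrt B / Real.sqrt A * A + B / (Real.sqrt B / Real.sqrt A)
          = 2 * (Real.sqrt A * Real.sqrt B) := by
        have hA' : Real.sqrt A ^ 2 = A := Real.sq_sqrt hA
        have hB' : Real.sqrt B ^ 2 = B := Real.sq_sqrt hB
        field_simp
        nlinarith [hA', hB']
      rw [e] at h1; linarith

lemma key_coupling (μ ν : Measure ℝ) [IsProbabilityMeasure μ] [IsProbabilityMeasure ν]
    (hμ : Integrable (fun x => x ^ 2) μ) (hν : Integrable (fun x => x ^ 2) ν)
    (γ : Measure (ℝ × ℝ)) [IsProbabilityMeasure γ]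
    (h1 : γ.map Prod.fst = μ) (h2 : γ.map Prod.snd = ν) :
    (sdev μ - sdev ν) ^ 2 + (mean μ - mean ν) ^ 2 ≤ ∫ p, (p.1 - p.2) ^ 2 ∂γ := by
  have hμid := int_id_of_sq hμ
  have hνid := int_id_of_sq hν
  have gsq1 : Integrable (fun p : ℝ × ℝ => p.1 ^ 2) γ :=
    integrable_fst h1 (f := fun x => x ^ 2) (by fun_prop) hμ
  have gsq2 : Integrable (fun p : ℝ × ℝ => p.2 ^ 2) γ :=
    integrable_snd h2 (f := fun x => x ^ 2) (by fun_prop) hν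
  have gid1 : Integrable (fun p : ℝ × ℝ => p.1) γ :=
    integrable_fst h1 (f := fun x => x) aestronglyMeasurable_id hμid
  have gid2 : Integrable (fun p : ℝ × ℝ => p.2) γ :=
    integrable_snd h2 (f := fun x => x) aestronglyMeasurable_id hνid
  have g12 : Integrable (fun p : ℝ × ℝ => p.1 * p.2) γ := by
    have hg : Integrable (fun p : ℝ × ℝ => (p.1 ^ 2 + p.2 ^ 2) / 2) γ :=
      (gsq1.add gsq2).div_const 2
    refine hg.mono' ((measurable_fst.mul measurable_snd).aestronglyMeasurable)
      (ae_of_all _ fun p => ?_)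
    rw [Real.norm_eq_abs, abs_mul]
    nlinarith [sq_nonneg (|p.1| - |p.2|), sq_abs p.1, sq_abs p.2, abs_nonneg p.1, abs_nonneg p.2]
  have e1 : ∫ p, p.1 ∂γ = mean μ := integral_fst h1 (f := fun x => x) aestronglyMeasurable_id
  have e2 : ∫ p, p.2 ∂γ = mean ν := integral_snd h2 (f := fun x => x) aestronglyMeasurable_id
  have esq1 : ∫ p, p.1 ^ 2 ∂γ = ∫ x, x ^ 2 ∂μ := integral_fst h1 (f := fun x => x ^ 2) (by fun_prop)
  have esq2 : ∫ p, p.2 ^ 2 ∂γ = ∫ x, x ^ 2 ∂ν := integral_snd h2 (f := fun x => x ^ 2) (by fun_prop)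
  have eq1 : ∫ p, (p.1 - mean μ) ^ 2 ∂γ = (∫ x, x ^ 2 ∂μ) - mean μ ^ 2 := by
    rw [integral_fst h1 (f := fun x => (x - mean μ) ^ 2) (((continuous_id.sub continuous_const).pow 2).aestronglyMeasurable), var_eq hμ (mean μ)]; ring
  have eq2 : ∫ p, (p.2 - mean ν) ^ 2 ∂γ = (∫ x, x ^ 2 ∂ν) - mean ν ^ 2 := by
    rw [integral_snd h2 (f := fun x => (x - mean ν) ^ 2) (((continuous_id.sub continuous_const).pow 2).aestronglyMeasurable), var_eq hν (mean ν)]; ring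
  have ha1 : Integrable (fun p : ℝ × ℝ => (p.1 - mean μ) ^ 2) γ :=
    integrable_fst h1 (f := fun x => (x - mean μ) ^ 2) (((continuous_id.sub continuous_const).pow 2).aestronglyMeasurable) (int_centered_sq hμ _)
  have ha2 : Integrable (fun p : ℝ × ℝ => (p.2 - mean ν) ^ 2) γ :=
    integrable_snd h2 (f := fun x => (x - mean ν) ^ 2) (((continuous_id.sub continuous_const).pow 2).aestronglyMeasurable) (int_centered_sq hν _)
  have hcs : (∫ p, p.1 * p.2 ∂γ) - mean μ * mean ν ≤ sdev μ * sdev ν := by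
    unfold sdev
    refine aux_cs (var_nonneg hμ) (var_nonneg hν) fun a ha => ?_
    have hpt : ∀ p : ℝ × ℝ,
        p.1 * p.2 - (mean μ * p.2 + mean ν * p.1 - mean μ * mean ν)
          ≤ (a * (p.1 - mean μ) ^ 2 + (p.2 - mean ν) ^ 2 / a) / 2 := by
      intro p
      have key : 0 ≤ (a * (p.1 - mean μ) - (p.2 - mean ν)) ^ 2 / a :=
        div_nonneg (sq_nonneg _) ha.le
      have expand : (a * (p.1 - mean μ) - (p.2 - mean ν)) ^ 2 / a
          = a * (p.1 - mean μ) ^ 2 - 2 * ((p.1 - mean μ) * (p.2 - mean ν))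
            + (p.2 - mean ν) ^ 2 / a := by
        field_simp; ring
      rw [expand] at key
      have lhs_eq : p.1 * p.2 - (mean μ * p.2 + mean ν * p.1 - mean μ * mean ν)
          = (p.1 - mean μ) * (p.2 - mean ν) := by ring
      rw [lhs_eq]; linarith
    have hIL : Integrable
        (fun p : ℝ × ℝ => p.1 * p.2 - (mean μ * p.2 + mean ν * p.1 - mean μ * mean ν)) γ :=
      g12.sub (((gid2.const_mul (mean μ)).add (gid1.const_mul (mean ν))).sub (integrable_const _))
    have hIR : Integrable
        (fun p : ℝ × ℝ => (a * (p.1 - mean μ) ^ 2 + (p.2 - mean ν) ^ 2 / a) / 2) γ :=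
      ((ha1.const_mul a).add (ha2.div_const a)).div_const 2
    have hmono := integral_mono hIL hIR hpt
    have hsub : Integrable
        (fun p : ℝ × ℝ => mean μ * p.2 + mean ν * p.1 - mean μ * mean ν) γ :=
      ((gid2.const_mul (mean μ)).add (gid1.const_mul (mean ν))).sub (integrable_const _)
    have hadd : Integrable (fun p : ℝ × ℝ => mean μ * p.2 + mean ν * p.1) γ :=
      (gid2.const_mul (mean μ)).add (gid1.const_mul (mean ν))
    rw [integral_sub g12 hsub, integral_sub hadd (integrable_const _),
      integral_add (gid2.const_mul (mean μ)) (gid1.const_mul (mean ν)),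
      integral_const_mul, integral_const_mul, e1, e2, integral_const] at hmono
    have hIRa : Integrable (fun p : ℝ × ℝ => a * (p.1 - mean μ) ^ 2 + (p.2 - mean ν) ^ 2 / a) γ :=
      (ha1.const_mul a).add (ha2.div_const a)
    rw [show (fun p : ℝ × ℝ => (a * (p.1 - mean μ) ^ 2 + (p.2 - mean ν) ^ 2 / a) / 2)
        = fun p : ℝ × ℝ => (a * (p.1 - mean μ) ^ 2 + (p.2 - mean ν) ^ 2 / a) / 2 from rfl,
      integral_div, integral_add (ha1.const_mul a) (ha2.div_const a),
      integral_const_mul, integral_div, eq1, eq2] at hmono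
    simp [measure_univ] at hmono
    linarith
  have hexp : ∫ p, (p.1 - p.2) ^ 2 ∂γ
      = (∫ x, x ^ 2 ∂μ) + (∫ x, x ^ 2 ∂ν) - 2 * ∫ p, p.1 * p.2 ∂γ := by
    have e : (fun p : ℝ × ℝ => (p.1 - p.2) ^ 2)
        = fun p => p.1 ^ 2 + p.2 ^ 2 - 2 * (p.1 * p.2) := by funext p; ring
    have hsum : Integrable (fun p : ℝ × ℝ => p.1 ^ 2 + p.2 ^ 2) γ := gsq1.add gsq2
    rw [e, integral_sub hsum (g12.const_mul 2), integral_add gsq1 gsq2,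
      integral_const_mul, esq1, esq2]
  have s1 := sdev_sq hμ
  have s2 := sdev_sq hν
  nlinarith [hcs, hexp, s1, s2]

lemma integrable_dist_sq (μ ν : Measure ℝ) [IsProbabilityMeasure μ] [IsProbabilityMeasure ν]
    (hμ : Integrable (fun x => x ^ 2) μ) (hν : Integrable (fun x => x ^ 2) ν)
    (γ : Measure (ℝ × ℝ)) [IsProbabilityMeasure γ]
    (h1 : γ.map Prod.fst = μ) (h2 : γ.map Prod.snd = ν) :
    Integrable (fun p : ℝ × ℝ => (p.1 - p.2) ^ 2) γ := by
  have gsq1 : Integrable (fun p : ℝ × ℝ => p.1 ^ 2) γ :=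
    integrable_fst h1 (f := fun x => x ^ 2) (by fun_prop) hμ
  have gsq2 : Integrable (fun p : ℝ × ℝ => p.2 ^ 2) γ :=
    integrable_snd h2 (f := fun x => x ^ 2) (by fun_prop) hν
  have hg : Integrable (fun p : ℝ × ℝ => 2 * (p.1 ^ 2 + p.2 ^ 2)) γ :=
    (gsq1.add gsq2).const_mul 2
  refine hg.mono' ?_ (ae_of_all _ fun p => ?_)
  · exact ((measurable_fst.sub measurable_snd).pow_const 2).aestronglyMeasurable
  · rw [Real.norm_eq_abs, abs_of_nonneg (sq_nonneg _)]
    nlinarith [sq_nonneg (p.1 + p.2)]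

/-- Quadratic Kantorovich lower bound:
`D_2(μ,ν)² ≥ (s(μ) − s(ν))² + (m(μ) − m(ν))²`. -/
theorem wasserstein2_lower_bound
    (μ ν : Measure ℝ) [IsProbabilityMeasure μ] [IsProbabilityMeasure ν]
    (hμ : Integrable (fun x => x ^ 2) μ) (hν : Integrable (fun x => x ^ 2) ν) :
    ENNReal.ofReal ((sdev μ - sdev ν) ^ 2 + (mean μ - mean ν) ^ 2) ≤
      wassersteinDist 2 μ ν ^ (2 : ℝ) := by
  set K := (sdev μ - sdev ν) ^ 2 + (mean μ - mean ν) ^ 2 with hKdef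
  have main : ∀ γ ∈ {γ : Measure (ℝ × ℝ) | IsProbabilityMeasure γ ∧ IsCoupling γ μ ν},
      ENNReal.ofReal K ≤ ∫⁻ p, edist p.1 p.2 ^ (2 : ℝ) ∂γ := by
    rintro γ ⟨hprob, hc1, hc2⟩
    haveI := hprob
    have heq : ∀ p : ℝ × ℝ, edist p.1 p.2 ^ (2 : ℝ) = ENNReal.ofReal ((p.1 - p.2) ^ 2) := by
      intro p
      rw [edist_dist, Real.dist_eq,
        ENNReal.ofReal_rpow_of_nonneg (abs_nonneg _) (by norm_num : (0:ℝ) ≤ 2)]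
      congr 1
      rw [show ((2 : ℝ)) = ((2 : ℕ) : ℝ) by norm_num, Real.rpow_natCast, sq_abs]
    simp_rw [heq]
    rw [← ofReal_integral_eq_lintegral_ofReal
      (integrable_dist_sq μ ν hμ hν γ hc1 hc2) (ae_of_all _ fun p => sq_nonneg _)]
    exact ENNReal.ofReal_le_ofReal (key_coupling μ ν hμ hν γ hc1 hc2)
  have step : ENNReal.ofReal K ^ ((2 : ℝ)⁻¹) ≤ wassersteinDist 2 μ ν := by
    rw [wassersteinDist]
    refine le_iInf₂ fun γ hγ => ?_
    rw [one_div]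
    exact ENNReal.rpow_le_rpow (main γ hγ) (by norm_num)
  calc ENNReal.ofReal K = (ENNReal.ofReal K ^ ((2 : ℝ)⁻¹)) ^ (2 : ℝ) := by
        rw [← ENNReal.rpow_mul]; norm_num
    _ ≤ wassersteinDist 2 μ ν ^ (2 : ℝ) := ENNReal.rpow_le_rpow step (by norm_num)
end
end

section
/- Convolution of marginals for covariant phase space observables: if M is the covariant phase space observable generated by a density operator σ, i.e., M(Z) = ∫_{(q,p)∈Z} W(q,p) Πσ Π W(q,p)* dq dp/(2πħ), then for every state ρ the position marginal satisfies M^Q_ρ = E^Q_ρ ∗ E^Q_σ and the momentum marginal satisfies M^P_ρ = E^P_ρ ∗ E^P_σ, where ∗ denotes convolution of probability measures on ℝ. -/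
/-!
For the position marginal, `⟨ψ, W(q,p)Πφ⟩` is, up to a phase, `√(2π)` times the Fourier
transform at `-p` of `x ↦ conj (ψ x) * φ (q - x)`, so Plancherel in `p` turns
`∫ |⟨ψ, W(q,p)Πφ⟩|² dp / 2π` into `∫ |ψ x|² |φ (q - x)|² dx`. The Fourier transform
intertwines `W(q,p)Π` with `W(p,-q)Π`, so by Parseval `⟨ψ, W(q,p)Πφ⟩ = ⟨ψ̂, W(p,-q)Πφ̂⟩`,
and the momentum marginal for `(ψ, φ)` is the position marginal for `(ψ̂, φ̂)`.
-/

open MeasureTheory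

noncomputable section

/-- The Fourier transform (physics convention, `ħ = 1`) of a Schwartz function. -/
def fhat (f : SchwartzMap ℝ ℂ) (p : ℝ) : ℂ :=
  (1 / Real.sqrt (2 * Real.pi) : ℝ) * ∫ x : ℝ, Complex.exp (-Complex.I * p * x) * f x

/-- The matrix element `⟨ψ, W(q,p) Π φ⟩` of a Weyl operator composed with parity,
where `(W(q,p)Πφ)(x) = e^{−iqp/2 + ipx} φ(q−x)`. -/
def weylMatrixElement (ψ φ : SchwartzMap ℝ ℂ) (q p : ℝ) : ℂ :=
  ∫ x : ℝ, starRingEnd ℂ (ψ x) *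
    (Complex.exp (-Complex.I * q * p / 2 + Complex.I * p * x) * φ (q - x))

open Complex Real SchwartzMap
open scoped FourierTransform

lemma iteratedDeriv_cexp_mul_ofReal (c : ℂ) (n : ℕ) :
    iteratedDeriv n (fun x : ℝ ↦ cexp (c * x)) = fun x : ℝ ↦ c ^ n * cexp (c * x) := by
  induction n with
  | zero => simp
  | succ n ih =>
    rw [iteratedDeriv_succ, ih]
    ext x
    exact ((((hasDerivAt_id x).ofReal_comp.const_mul c).cexp).const_mul (c ^ n)).deriv.trans
      (by simp; ring)

lemma hasTemperateGrowth_cexp_mul_ofReal {c : ℂ} (hc : c.re = 0) :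
    Function.HasTemperateGrowth (fun x : ℝ ↦ cexp (c * x)) := by
  refine ⟨(contDiff_const.mul ofRealCLM.contDiff).cexp,
    fun n ↦ ⟨0, ‖c‖ ^ n, fun x ↦ ?_⟩⟩
  rw [norm_iteratedFDeriv_eq_norm_iteratedDeriv, iteratedDeriv_cexp_mul_ofReal, norm_mul,
    norm_pow, norm_exp]
  simp [hc]

/-- `W(q,p)Π` on Schwartz space. -/
def weylParity (q p : ℝ) (f : 𝓢(ℝ, ℂ)) : 𝓢(ℝ, ℂ) :=
  cexp (-I * q * p / 2) • smulLeftCLM ℂ (fun x : ℝ ↦ cexp (I * p * x))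
    (compSubConstCLM ℂ q (compCLMOfContinuousLinearEquiv ℂ (.neg ℝ) f))

lemma weylParity_apply (q p : ℝ) (f : 𝓢(ℝ, ℂ)) (x : ℝ) :
    weylParity q p f x = cexp (-I * q * p / 2 + I * p * x) * f (q - x) := by
  have hI : (I * p).re = 0 := by simp
  simp only [weylParity, smul_apply,
    smulLeftCLM_apply_apply (hasTemperateGrowth_cexp_mul_ofReal hI), compSubConstCLM_apply,
    compCLMOfContinuousLinearEquiv_apply, ContinuousLinearEquiv.coe_neg,
    Function.comp_apply, Pi.neg_apply, id_eq, neg_sub, smul_eq_mul, Complex.exp_add]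
  ring

lemma weylMatrixElement_eq_integral (ψ φ : 𝓢(ℝ, ℂ)) (q p : ℝ) :
    weylMatrixElement ψ φ q p = ∫ x, starRingEnd ℂ (ψ x) * weylParity q p φ x := by
  simp only [weylMatrixElement, weylParity_apply]

lemma fhat_eq_fourier (f : 𝓢(ℝ, ℂ)) (k : ℝ) :
    fhat f k = ((1 / √(2 * π) : ℝ) : ℂ) * 𝓕 (⇑f) (k / (2 * π)) := by
  rw [fhat, Real.fourier_real_eq_integral_exp_smul]
  congr 2 with x
  rw [smul_eq_mul]
  congr 2
  push_cast
  field_simp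

def physFourier (f : 𝓢(ℝ, ℂ)) : 𝓢(ℝ, ℂ) :=
  ((1 / √(2 * π) : ℝ) : ℂ) •
    compCLMOfContinuousLinearEquiv ℂ (.unitsEquivAut ℝ (.mk0 (2 * π)⁻¹ (by positivity))) (𝓕 f)

lemma physFourier_apply (f : 𝓢(ℝ, ℂ)) (k : ℝ) : physFourier f k = fhat f k := by
  simp [physFourier, fhat_eq_fourier, fourier_coe, div_eq_mul_inv]

lemma integral_conj_fhat_mul_fhat (f g : 𝓢(ℝ, ℂ)) :
    ∫ k, starRingEnd ℂ (fhat f k) * fhat g k = ∫ x, starRingEnd ℂ (f x) * g x := by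
  have hc : ((1 / √(2 * π) : ℝ) : ℂ) * ((1 / √(2 * π) : ℝ) : ℂ) * (2 * π : ℝ) = 1 := by
    rw [← ofReal_mul, ← ofReal_mul, div_mul_div_comm, one_mul, mul_self_sqrt (by positivity),
      one_div_mul_cancel (by positivity), ofReal_one]
  simp only [fhat_eq_fourier, map_mul, conj_ofReal]
  calc ∫ k, (1 / √(2 * π) : ℝ) * starRingEnd ℂ (𝓕 (⇑f) (k / (2 * π))) *
        ((1 / √(2 * π) : ℝ) * 𝓕 (⇑g) (k / (2 * π)))
      = ((1 / √(2 * π) : ℝ) : ℂ) * ((1 / √(2 * π) : ℝ) : ℂ) *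
          ∫ k, (fun ξ ↦ inner ℂ (𝓕 f ξ) (𝓕 g ξ)) (k / (2 * π)) := by
        rw [← integral_const_mul]
        congr 1 with k
        simp only [fourier_coe, RCLike.inner_apply]
        ring
    _ = ∫ x, starRingEnd ℂ (f x) * g x := by
        rw [Measure.integral_comp_div (fun ξ ↦ inner ℂ (𝓕 f ξ) (𝓕 g ξ)),
          integral_inner_fourier_fourier, abs_of_pos (by positivity), real_smul, ← mul_assoc, hc,
          one_mul]
        simp only [RCLike.inner_apply, mul_comm]

lemma integral_norm_sq_fhat (f : 𝓢(ℝ, ℂ)) : ∫ k, ‖fhat f k‖ ^ 2 = ∫ x, ‖f x‖ ^ 2 := by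
  apply ofReal_injective
  rw [← integral_complex_ofReal, ← integral_complex_ofReal]
  simpa only [ofReal_pow, conj_mul'] using integral_conj_fhat_mul_fhat f f

lemma physFourier_weylParity (q p : ℝ) (f : 𝓢(ℝ, ℂ)) :
    physFourier (weylParity q p f) = weylParity p (-q) (physFourier f) := by
  ext k
  rw [physFourier_apply, weylParity_apply, physFourier_apply, fhat, fhat, mul_left_comm,
    ← integral_const_mul (cexp _), ← integral_sub_left_eq_self _ volume q]
  congr 2 with x
  rw [weylParity_apply, sub_sub_cancel, ← mul_assoc, ← mul_assoc, ← Complex.exp_add,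
    ← Complex.exp_add]
  congr 2
  push_cast
  ring

lemma weylMatrixElement_physFourier (ψ φ : 𝓢(ℝ, ℂ)) (q p : ℝ) :
    weylMatrixElement (physFourier ψ) (physFourier φ) p (-q) = weylMatrixElement ψ φ q p := by
  simp only [weylMatrixElement_eq_integral, ← physFourier_weylParity, physFourier_apply,
    integral_conj_fhat_mul_fhat]

lemma integral_momentum_norm_sq_weylMatrixElement (ψ φ : 𝓢(ℝ, ℂ)) (q : ℝ) :
    ∫ p, ‖weylMatrixElement ψ φ q p‖ ^ 2 = 2 * π * ∫ x, ‖ψ x‖ ^ 2 * ‖φ (q - x)‖ ^ 2 := by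
  have hψ : Function.HasTemperateGrowth (fun x ↦ starRingEnd ℂ (ψ x)) :=
    conjCLE.hasTemperateGrowth.comp ψ.hasTemperateGrowth
  set g : 𝓢(ℝ, ℂ) := smulLeftCLM ℂ (fun x ↦ starRingEnd ℂ (ψ x)) (weylParity q 0 φ)
  have hg : ∀ x, g x = starRingEnd ℂ (ψ x) * φ (q - x) := fun x ↦ by
    simp [g, smulLeftCLM_apply_apply hψ, weylParity_apply]
  have hW : ∀ p : ℝ,
      weylMatrixElement ψ φ q p = cexp (-I * q * p / 2) * √(2 * π) * fhat g (-p) := by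
    intro p
    rw [fhat, ← mul_assoc, mul_assoc _ _ ((_ : ℝ) : ℂ), ← ofReal_mul,
      mul_one_div_cancel (by positivity), ofReal_one, mul_one, ← integral_const_mul,
      weylMatrixElement]
    congr 1 with x
    rw [hg, Complex.exp_add]
    push_cast
    rw [neg_mul_neg]
    ring
  have hW_norm : ∀ p : ℝ, ‖weylMatrixElement ψ φ q p‖ ^ 2 = 2 * π * ‖fhat g (-p)‖ ^ 2 := by
    intro p
    rw [hW, norm_mul, norm_mul, mul_pow, mul_pow, norm_exp, norm_real,
      Real.norm_of_nonneg (sqrt_nonneg _), sq_sqrt (by positivity)]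
    simp
  simp only [hW_norm, integral_const_mul]
  rw [integral_neg_eq_self (fun p ↦ ‖fhat g p‖ ^ 2), integral_norm_sq_fhat]
  simp only [hg, norm_mul, RCLike.norm_conj, mul_pow]

lemma integral_position_norm_sq_weylMatrixElement (ψ φ : 𝓢(ℝ, ℂ)) (p : ℝ) :
    ∫ q, ‖weylMatrixElement ψ φ q p‖ ^ 2 =
      2 * π * ∫ k, ‖fhat ψ k‖ ^ 2 * ‖fhat φ (p - k)‖ ^ 2 := by
  simp only [← weylMatrixElement_physFourier ψ φ, ← physFourier_apply]
  rw [integral_neg_eq_self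
      (fun q ↦ ‖weylMatrixElement (physFourier ψ) (physFourier φ) p q‖ ^ 2),
    integral_momentum_norm_sq_weylMatrixElement]

theorem covariant_marginals_convolve_general
    (ψ φ : SchwartzMap ℝ ℂ) :
    (∀ q : ℝ,
      (1 / (2 * Real.pi)) * ∫ p : ℝ, ‖weylMatrixElement ψ φ q p‖ ^ 2 =
        ∫ x : ℝ, ‖ψ x‖ ^ 2 * ‖φ (q - x)‖ ^ 2) ∧
    (∀ p : ℝ,
      (1 / (2 * Real.pi)) * ∫ q : ℝ, ‖weylMatrixElement ψ φ q p‖ ^ 2 =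
        ∫ k : ℝ, ‖fhat ψ k‖ ^ 2 * ‖fhat φ (p - k)‖ ^ 2) := by
  have h2π : 1 / (2 * π) * (2 * π) = 1 := one_div_mul_cancel (by positivity)
  refine ⟨fun q ↦ ?_, fun p ↦ ?_⟩
  · rw [integral_momentum_norm_sq_weylMatrixElement, ← mul_assoc, h2π, one_mul]
  · rw [integral_position_norm_sq_weylMatrixElement, ← mul_assoc, h2π, one_mul]

/-- Convolution of marginals for the covariant phase space observable generated by the
density operator `σ = |φ⟩⟨φ|`, evaluated on the state `ρ = |ψ⟩⟨ψ|`: the density of the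
position marginal `M^Q_ρ` is the convolution of the position densities of `ρ` and `σ`,
and the density of the momentum marginal `M^P_ρ` is the convolution of the momentum
densities, i.e. `M^Q_ρ = E^Q_ρ ∗ E^Q_σ` and `M^P_ρ = E^P_ρ ∗ E^P_σ`. -/
theorem covariant_marginals_convolve
    (ψ φ : SchwartzMap ℝ ℂ)
    (hψ : ∫ x : ℝ, ‖ψ x‖ ^ 2 = 1) (hφ : ∫ x : ℝ, ‖φ x‖ ^ 2 = 1) :
    (∀ q : ℝ,
      (1 / (2 * Real.pi)) * ∫ p : ℝ, ‖weylMatrixElement ψ φ q p‖ ^ 2 =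
        ∫ x : ℝ, ‖ψ x‖ ^ 2 * ‖φ (q - x)‖ ^ 2) ∧
    (∀ p : ℝ,
      (1 / (2 * Real.pi)) * ∫ q : ℝ, ‖weylMatrixElement ψ φ q p‖ ^ 2 =
        ∫ k : ℝ, ‖fhat ψ k‖ ^ 2 * ‖fhat φ (p - k)‖ ^ 2) :=
  covariant_marginals_convolve_general ψ φ

end
end

section
/- Distance of a convolved observable from a sharp one: let E be a sharp (projection-valued) observable on ℝ, η a probability measure on ℝ, and F = η ∗ E the observable with F_ρ = η ∗ E_ρ for all states ρ. Then D_α(F, E) := sup_ρ D_α(F_ρ, E_ρ) = D_α(η, δ_0) = (∫|x|^α dη(x))^{1/α} for 1 ≤ α < ∞. -/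
/-!
A coupling of `η ∗ μ` with `μ` is obtained by pairing `x + y` with `y`, where `x ∼ η` and
`y ∼ μ` are independent; its cost is the `α`-th moment of `η`, which gives the upper bound.
Conversely, Minkowski's inequality (the triangle inequality for `D_α` through `δ_q`) gives
`D_α(η, δ_0) ≤ D_α(η ∗ μ, μ) + 2 D_α(μ, δ_q)`, and sharpness makes the last term arbitrarily small.
-/

open MeasureTheory ENNReal

noncomputable section

theorem lintegral_rpow_rpow_le_add_of_le {X : Type*} [MeasurableSpace X] {μ : Measure X}
    {p : ℝ} (hp : 1 ≤ p) {f g h : X → ℝ≥0∞} (hg : AEMeasurable g μ) (hh : AEMeasurable h μ)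
    (hfgh : ∀ x, f x ≤ g x + h x) :
    (∫⁻ x, f x ^ p ∂μ) ^ (1 / p) ≤ (∫⁻ x, g x ^ p ∂μ) ^ (1 / p) + (∫⁻ x, h x ^ p ∂μ) ^ (1 / p) :=
  calc (∫⁻ x, f x ^ p ∂μ) ^ (1 / p) ≤ (∫⁻ x, (g + h) x ^ p ∂μ) ^ (1 / p) := by
        gcongr with x
        exact hfgh x
    _ ≤ _ := ENNReal.lintegral_Lp_add_le hg hh hp

def momentAbout (α : ℝ) (μ : Measure ℝ) (q : ℝ) : ℝ≥0∞ :=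
  (∫⁻ x, edist x q ^ α ∂μ) ^ (1 / α)

def transportCost (α : ℝ) (γ : Measure (ℝ × ℝ)) : ℝ≥0∞ :=
  (∫⁻ p, edist p.1 p.2 ^ α ∂γ) ^ (1 / α)

theorem measurable_edist_rpow (q α : ℝ) : Measurable fun x : ℝ => edist x q ^ α :=
  (measurable_id.edist measurable_const).pow_const α

namespace IsCoupling

variable {γ : Measure (ℝ × ℝ)} {μ ν : Measure ℝ}

theorem lintegral_fst (hγ : IsCoupling γ μ ν) {f : ℝ → ℝ≥0∞} (hf : Measurable f) :
    ∫⁻ p, f p.1 ∂γ = ∫⁻ x, f x ∂μ := by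
  rw [← hγ.1, lintegral_map hf measurable_fst]

theorem lintegral_snd (hγ : IsCoupling γ μ ν) {f : ℝ → ℝ≥0∞} (hf : Measurable f) :
    ∫⁻ p, f p.2 ∂γ = ∫⁻ x, f x ∂ν := by
  rw [← hγ.2, lintegral_map hf measurable_snd]

theorem transportCost_dirac {q : ℝ} (hγ : IsCoupling γ μ (Measure.dirac q)) (α : ℝ) :
    transportCost α γ = momentAbout α μ q := by
  have hsnd : ∀ᵐ p ∂γ, p.2 = q := by
    have : γ (Prod.snd ⁻¹' {q}ᶜ) = 0 := by
      rw [← Measure.map_apply measurable_snd (measurableSet_singleton q).compl, hγ.2]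
      simp
    filter_upwards [measure_eq_zero_iff_ae_notMem.mp this] with p hp
    simpa using hp
  rw [transportCost, momentAbout, ← hγ.lintegral_fst (measurable_edist_rpow q α)]
  congr 1
  exact lintegral_congr_ae (hsnd.mono fun p hp => by simp only [hp])

theorem momentAbout_le_transportCost_add (hγ : IsCoupling γ μ ν) {α : ℝ} (hα : 1 ≤ α) (q : ℝ) :
    momentAbout α μ q ≤ transportCost α γ + momentAbout α ν q := by
  rw [momentAbout, momentAbout, ← hγ.lintegral_fst (measurable_edist_rpow q α),
    ← hγ.lintegral_snd (measurable_edist_rpow q α)]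
  exact lintegral_rpow_rpow_le_add_of_le hα (measurable_fst.edist measurable_snd).aemeasurable
    (measurable_snd.edist measurable_const).aemeasurable fun p => edist_triangle _ _ _

theorem transportCost_le_add (hγ : IsCoupling γ μ ν) {α : ℝ} (hα : 1 ≤ α) (q : ℝ) :
    transportCost α γ ≤ momentAbout α μ q + momentAbout α ν q := by
  rw [momentAbout, momentAbout, ← hγ.lintegral_fst (measurable_edist_rpow q α),
    ← hγ.lintegral_snd (measurable_edist_rpow q α)]
  exact lintegral_rpow_rpow_le_add_of_le hα (measurable_fst.edist measurable_const).aemeasurable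
    (measurable_snd.edist measurable_const).aemeasurable fun p => edist_triangle_right _ _ _

end IsCoupling

theorem wassersteinDist_dirac (α : ℝ) (μ : Measure ℝ) [IsProbabilityMeasure μ] (q : ℝ) :
    wassersteinDist α μ (Measure.dirac q) = momentAbout α μ q := by
  have hprod : IsCoupling (μ.prod (Measure.dirac q)) μ (Measure.dirac q) := by
    constructor <;> simp [Measure.map_fst_prod, Measure.map_snd_prod]
  refine le_antisymm ?_ (le_iInf₂ fun γ hγ => (hγ.2.transportCost_dirac α).ge)
  refine (biInf_le _ ?_).trans_eq (hprod.transportCost_dirac α)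
  exact ⟨inferInstance, hprod⟩

theorem momentAbout_le_wassersteinDist_add {α : ℝ} (hα : 1 ≤ α) (μ ν : Measure ℝ) (q : ℝ) :
    momentAbout α μ q ≤ wassersteinDist α μ ν + momentAbout α ν q := by
  rw [wassersteinDist, ← tsub_le_iff_right]
  exact le_iInf₂ fun γ hγ =>
    tsub_le_iff_right.mpr (hγ.2.momentAbout_le_transportCost_add hα q)

theorem measurable_add_fst_snd : Measurable fun p : ℝ × ℝ => (p.1 + p.2, p.2) :=
  (measurable_fst.add measurable_snd).prodMk measurable_snd

def convCoupling (η μ : Measure ℝ) : Measure (ℝ × ℝ) :=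
  (η.prod μ).map fun p => (p.1 + p.2, p.2)

section convCoupling

variable (η μ : Measure ℝ) [IsProbabilityMeasure μ]

instance [IsProbabilityMeasure η] : IsProbabilityMeasure (convCoupling η μ) :=
  Measure.isProbabilityMeasure_map measurable_add_fst_snd.aemeasurable

theorem isCoupling_convCoupling [IsProbabilityMeasure η] :
    IsCoupling (convCoupling η μ) (mconv η μ) μ := by
  constructor
  · rw [convCoupling, Measure.map_map measurable_fst measurable_add_fst_snd]
    rfl
  · rw [convCoupling, Measure.map_map measurable_snd measurable_add_fst_snd]
    simp [Function.comp_def, Measure.map_snd_prod]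

theorem transportCost_convCoupling (α : ℝ) :
    transportCost α (convCoupling η μ) = momentAbout α η 0 := by
  have hshift : ∀ p : ℝ × ℝ, edist (p.1 + p.2) p.2 = edist p.1 0 := fun p => by
    simpa using edist_add_right p.1 0 p.2
  rw [transportCost, convCoupling,
    lintegral_map ((measurable_fst.edist measurable_snd).pow_const α) measurable_add_fst_snd]
  simp only [hshift]
  rw [← lintegral_map (measurable_edist_rpow 0 α) measurable_fst, Measure.map_fst_prod]
  simp [momentAbout]

theorem wassersteinDist_mconv_le [IsProbabilityMeasure η] (α : ℝ) :
    wassersteinDist α (mconv η μ) μ ≤ momentAbout α η 0 := by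
  refine (biInf_le _ ?_).trans_eq (transportCost_convCoupling η μ α)
  exact ⟨inferInstance, isCoupling_convCoupling η μ⟩

theorem momentAbout_le_wassersteinDist_mconv_add [IsProbabilityMeasure η] {α : ℝ} (hα : 1 ≤ α)
    (q : ℝ) :
    momentAbout α η 0 ≤ wassersteinDist α (mconv η μ) μ + 2 * momentAbout α μ q :=
  calc momentAbout α η 0 = transportCost α (convCoupling η μ) :=
        (transportCost_convCoupling η μ α).symm
    _ ≤ momentAbout α (mconv η μ) q + momentAbout α μ q :=
        (isCoupling_convCoupling η μ).transportCost_le_add hα q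
    _ ≤ wassersteinDist α (mconv η μ) μ + momentAbout α μ q + momentAbout α μ q := by
        gcongr
        exact momentAbout_le_wassersteinDist_add hα _ _ q
    _ = wassersteinDist α (mconv η μ) μ + 2 * momentAbout α μ q := by
        rw [two_mul, add_assoc]

end convCoupling

theorem dist_of_convolved_observable_general
    {S : Type*} (α : ℝ) (hα : 1 ≤ α)
    (η : Measure ℝ) [IsProbabilityMeasure η]
    (E : S → Measure ℝ) (hE : ∀ ρ, IsProbabilityMeasure (E ρ))
    (hsharp : ∀ ε : ℝ≥0∞, 0 < ε →
      ∃ (ρ : S) (q : ℝ), wassersteinDist α (E ρ) (Measure.dirac q) ≤ ε) :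
    (⨆ ρ : S, wassersteinDist α (mconv η (E ρ)) (E ρ)) =
      wassersteinDist α η (Measure.dirac 0) ∧
    wassersteinDist α η (Measure.dirac 0) = (∫⁻ x, edist x 0 ^ α ∂η) ^ (1 / α) := by
  refine ⟨?_, wassersteinDist_dirac α η 0⟩
  rw [wassersteinDist_dirac α η 0]
  refine le_antisymm (iSup_le fun ρ => wassersteinDist_mconv_le η (E ρ) α) ?_
  refine ENNReal.le_of_forall_pos_le_add fun ε hε _ => ?_
  obtain ⟨ρ, q, hq⟩ := hsharp (ε / 2) (by simpa using hε.ne')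
  rw [wassersteinDist_dirac α (E ρ) q] at hq
  calc momentAbout α η 0
      ≤ wassersteinDist α (mconv η (E ρ)) (E ρ) + 2 * momentAbout α (E ρ) q :=
        momentAbout_le_wassersteinDist_mconv_add η (E ρ) hα q
    _ ≤ (⨆ ρ, wassersteinDist α (mconv η (E ρ)) (E ρ)) + 2 * (ε / 2) := by
        gcongr
        exact le_iSup (fun ρ => wassersteinDist α (mconv η (E ρ)) (E ρ)) ρ
    _ = (⨆ ρ, wassersteinDist α (mconv η (E ρ)) (E ρ)) + ε := by
        rw [ENNReal.mul_div_cancel two_ne_zero ofNat_ne_top]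

/-- Distance of a convolved observable from a sharp one. An observable is modelled as
a map from states to outcome probability distributions; `F = η ∗ E` adds the noise `η`.
Sharpness of `E` enters through the property that its distributions can be concentrated
arbitrarily close to a point. Then
`D_α(F, E) = sup_ρ D_α(F_ρ, E_ρ) = D_α(η, δ_0) = (∫|x|^α dη)^{1/α}`. -/
theorem dist_of_convolved_observable
    {S : Type*} [Nonempty S] (α : ℝ) (hα : 1 ≤ α)
    (η : Measure ℝ) [IsProbabilityMeasure η]
    (E : S → Measure ℝ) (hE : ∀ ρ, IsProbabilityMeasure (E ρ))
    (hsharp : ∀ ε : ℝ≥0∞, 0 < ε →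
      ∃ (ρ : S) (q : ℝ), wassersteinDist α (E ρ) (Measure.dirac q) ≤ ε) :
    (⨆ ρ : S, wassersteinDist α (mconv η (E ρ)) (E ρ)) =
      wassersteinDist α η (Measure.dirac 0) ∧
    wassersteinDist α η (Measure.dirac 0) = (∫⁻ x, edist x 0 ^ α ∂η) ^ (1 / α) :=
  dist_of_convolved_observable_general α hα η E hE hsharp
end
end
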